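/- In the polynomial ring ℚ[x₁, x₂, x₃], let e₁ = x₁ + x₂ + x₃, e₂ = x₁x₂ + x₂x₃ + x₁x₃, e₃ = x₁x₂x₃ be the elementary symmetric polynomials, and let J = (x₁ − x₂)(x₃ − x₂)(x₃ − x₁). Define the 3×3 matrix of polynomials F by its rows F₁ = (x₁²(x₂ − x₃), x₂²(x₃ − x₁), x₃²(x₁ − x₂)), F₂ = (x₁(x₃ − x₂), x₂(x₁ − x₃), x₃(x₂ − x₁)), F₃ = ((x₂ − x₃), (x₃ − x₁), (x₁ − x₂)). Then for all i, j ∈ {1, 2, 3}: ∑_{k=1}^{3} F_{ik} · ∂e_j/∂x_k = δ_{ij} · J, where ∂/∂x_k denotes the k-th partial derivative and δ_{ij} is the Kronecker delta. (Equivalently, F · Mᵀ = J·I₃ where M is the Jacobian matrix M_{jk} = ∂e_j/∂x_k; these identities express that the operators Y_i = J⁻¹∑_k F_{ik}∂_k and X_j = e_j satisfy the Weyl relations Y_iX_j − X_jY_i = δ_{ij} in the invariant skew field F₃(ℚ)^{S₃}.) -/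
import Mathlib


open MvPolynomial

/-- The elementary symmetric polynomials `e₁, e₂, e₃` in `ℚ[x₁, x₂, x₃]`. -/
noncomputable def elemSym : Fin 3 → MvPolynomial (Fin 3) ℚ :=
  ![X 0 + X 1 + X 2, X 0 * X 1 + X 1 * X 2 + X 0 * X 2, X 0 * X 1 * X 2]

/-- The polynomial `J = (x₁ − x₂)(x₃ − x₂)(x₃ − x₁)`. -/
noncomputable def Jpoly : MvPolynomial (Fin 3) ℚ :=
  (X 0 - X 1) * (X 2 - X 1) * (X 2 - X 0)

/-- The matrix `F` whose rows give the numerators of the invariant derivations `Y₁, Y₂, Y₃`. -/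
noncomputable def Fmat : Matrix (Fin 3) (Fin 3) (MvPolynomial (Fin 3) ℚ) :=
  !![X 0 ^ 2 * (X 1 - X 2), X 1 ^ 2 * (X 2 - X 0), X 2 ^ 2 * (X 0 - X 1);
     X 0 * (X 2 - X 1), X 1 * (X 0 - X 2), X 2 * (X 1 - X 0);
     X 1 - X 2, X 2 - X 0, X 0 - X 1]

/-- `∑ₖ F_{ik} ∂e_j/∂x_k = δ_{ij} J`, i.e. `F · Mᵀ = J·I₃` for the Jacobian `M`
of the elementary symmetric polynomials; these are the Weyl relations for the generators of
`F₃(ℚ)^{S₃}`. -/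
theorem weyl_relations_S3 :
    ∀ i j : Fin 3,
      ∑ l : Fin 3, Fmat i l * pderiv l (elemSym j) =
        if i = j then Jpoly else 0 := by
  intro i j
  fin_cases i <;> fin_cases j <;>
    simp [Fmat, elemSym, Jpoly, Fin.sum_univ_three, pderiv_X, Pi.single_apply] <;>
    ring
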